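/- Let Π_BJ be the operator on L²(ℝ) defined (for almost every x) by (Π_BJ ψ)(x) = ∫_0^1 (1/(2|τ-1|)) ψ(τx/(τ-1)) dτ. Then Π_BJ is bounded with operator norm at most π/2. -/

import Mathlib

/-!
Writing `Π_τ ψ (x) = ψ (τ x / (τ - 1)) / (2 |τ - 1|)` (`tauParity`), the operator is
`Π_BJ = ∫₀¹ Π_τ dτ`. Each `Π_τ` is a weight times a dilation by `τ / (τ - 1)`, and a dilation
by `a` scales the `L²` norm by `|a|^(-1/2)`, so `‖Π_τ ψ‖₂ = ‖ψ‖₂ / √(4 (τ - τ²))`. Minkowski's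
integral inequality (for `L²` it follows by expanding the square and applying Cauchy–Schwarz
under the integral) gives `‖Π_BJ ψ‖₂ ≤ ∫₀¹ ‖Π_τ ψ‖₂ dτ`, and `∫₀¹ dτ / √(4 (τ - τ²)) = π / 2`,
the antiderivative being `arcsin (2 τ - 1) / 2`.
-/

open Real MeasureTheory Measure Set Function
open scoped ENNReal

section Minkowski

variable {α β : Type*} [MeasurableSpace α] [MeasurableSpace β] {μ : Measure α} {ν : Measure β}

theorem sq_eLpNorm_two_eq_lintegral (f : β → ℝ≥0∞) :
    eLpNorm f 2 ν ^ 2 = ∫⁻ x, f x ^ 2 ∂ν := by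
  simpa using eLpNorm_nnreal_pow_eq_lintegral (f := f) (μ := ν) (p := 2) two_ne_zero

theorem lintegral_mul_le_eLpNorm_two_mul_eLpNorm_two {f g : β → ℝ≥0∞} (hf : AEMeasurable f ν)
    (hg : AEMeasurable g ν) : ∫⁻ x, f x * g x ∂ν ≤ eLpNorm f 2 ν * eLpNorm g 2 ν := by
  simpa [eLpNorm_eq_lintegral_rpow_enorm_toReal] using
    ENNReal.lintegral_mul_le_Lp_mul_Lq ν Real.HolderConjugate.two_two hf hg

theorem measurable_eLpNorm_two {K : α → β → ℝ≥0∞} [SFinite ν] (hK : Measurable (uncurry K)) :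
    Measurable fun τ => eLpNorm (K τ) 2 ν := by
  simp only [eLpNorm_eq_lintegral_rpow_enorm_toReal two_ne_zero ENNReal.ofNat_ne_top,
    enorm_eq_self]
  exact ((hK.pow_const _).lintegral_prod_right').pow_const _

theorem eLpNorm_two_lintegral_le_lintegral_eLpNorm_two [SFinite μ] [SFinite ν]
    {K : α → β → ℝ≥0∞} (hK : Measurable (uncurry K)) :
    eLpNorm (fun x => ∫⁻ τ, K τ x ∂μ) 2 ν ≤ ∫⁻ τ, eLpNorm (K τ) 2 ν ∂μ := by
  set C := fun x => ∫⁻ τ, K τ x ∂μ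
  have hKτ (τ : α) : Measurable (K τ) := hK.comp measurable_prodMk_left
  have hKx (x : β) : Measurable fun τ => K τ x := hK.comp measurable_prodMk_right
  have hC : Measurable C := hK.lintegral_prod_left'
  refine (ENNReal.pow_le_pow_left_iff two_ne_zero).mp ?_
  calc eLpNorm C 2 ν ^ 2 = ∫⁻ x, ∫⁻ τ, K τ x * C x ∂μ ∂ν := by
        rw [sq_eLpNorm_two_eq_lintegral]
        refine lintegral_congr fun x => ?_
        rw [sq, lintegral_mul_const _ (hKx x)]
    _ = ∫⁻ τ, ∫⁻ σ, ∫⁻ x, K τ x * K σ x ∂ν ∂μ ∂μ := by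
        rw [lintegral_lintegral_swap
          (hK.comp measurable_swap |>.mul (hC.comp measurable_fst)).aemeasurable]
        refine lintegral_congr fun τ => ?_
        simp_rw [C, ← lintegral_const_mul _ (hKx _)]
        exact lintegral_lintegral_swap
          ((hKτ τ).comp measurable_fst |>.mul (hK.comp measurable_swap)).aemeasurable
    _ ≤ ∫⁻ τ, ∫⁻ σ, eLpNorm (K τ) 2 ν * eLpNorm (K σ) 2 ν ∂μ ∂μ := by
        gcongr with τ σ
        exact lintegral_mul_le_eLpNorm_two_mul_eLpNorm_two (hKτ τ).aemeasurable (hKτ σ).aemeasurable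
    _ = (∫⁻ τ, eLpNorm (K τ) 2 ν ∂μ) ^ 2 := by
        rw [lintegral_lintegral_mul (measurable_eLpNorm_two hK).aemeasurable
          (measurable_eLpNorm_two hK).aemeasurable, sq]

theorem eLpNorm_two_integral_le_lintegral_eLpNorm_two [SFinite μ] [SFinite ν]
    {E : Type*} [NormedAddCommGroup E] [NormedSpace ℝ E] {F : α → β → E}
    (hF : AEStronglyMeasurable (uncurry F) (μ.prod ν)) :
    eLpNorm (fun x => ∫ τ, F τ x ∂μ) 2 ν ≤ ∫⁻ τ, eLpNorm (F τ) 2 ν ∂μ := by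
  set G := hF.mk
  have hFG : ∀ᵐ z ∂μ.prod ν, F z.1 z.2 = G z := hF.ae_eq_mk
  have hFG_fiber : ∀ᵐ x ∂ν, ∀ᵐ τ ∂μ, F τ x = G (τ, x) :=
    Measure.ae_ae_of_ae_prod (measurePreserving_swap.quasiMeasurePreserving.ae hFG)
  have hFG_slice : ∀ᵐ τ ∂μ, eLpNorm (fun x => ‖G (τ, x)‖ₑ) 2 ν = eLpNorm (F τ) 2 ν :=
    (Measure.ae_ae_of_ae_prod hFG).mono fun τ hτ => by
      rw [eLpNorm_enorm]; exact eLpNorm_congr_ae (hτ.mono fun x hx => hx.symm)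
  calc eLpNorm (fun x => ∫ τ, F τ x ∂μ) 2 ν
      ≤ eLpNorm (fun x => ∫⁻ τ, ‖G (τ, x)‖ₑ ∂μ) 2 ν := by
        refine eLpNorm_mono_enorm_ae (hFG_fiber.mono fun x hx => ?_)
        rw [enorm_eq_self, integral_congr_ae hx]
        exact enorm_integral_le_lintegral_enorm _
    _ ≤ ∫⁻ τ, eLpNorm (fun x => ‖G (τ, x)‖ₑ) 2 ν ∂μ :=
        eLpNorm_two_lintegral_le_lintegral_eLpNorm_two hF.stronglyMeasurable_mk.enorm
    _ = ∫⁻ τ, eLpNorm (F τ) 2 ν ∂μ := lintegral_congr_ae hFG_slice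

end Minkowski

section Dilation

variable {E F : Type*} [NormedAddCommGroup E] [NormedSpace ℝ E] [MeasurableSpace E] [BorelSpace E]
  [FiniteDimensional ℝ E] [NormedAddCommGroup F] (ν : Measure E) [ν.IsAddHaarMeasure]

theorem eLpNorm_comp_smul (f : E → F) {r : ℝ} (hr : r ≠ 0) {p : ℝ≥0∞} (hp : p ≠ ∞) :
    eLpNorm (fun x => f (r • x)) p ν =
      ENNReal.ofReal |(r ^ Module.finrank ℝ E)⁻¹| ^ (1 / p.toReal) * eLpNorm f p ν := by
  change eLpNorm (f ∘ Homeomorph.smulOfNeZero r hr) p ν = _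
  rw [← (Homeomorph.smulOfNeZero r hr).measurableEmbedding.eLpNorm_map_measure,
    Homeomorph.smulOfNeZero_apply, map_addHaar_smul ν hr, eLpNorm_smul_measure_of_ne_top hp,
    smul_eq_mul, ENNReal.toReal_div, ENNReal.toReal_one]

theorem quasiMeasurePreserving_smul_prod {α : Type*} [MeasurableSpace α] {μ : Measure α}
    {c : α → ℝ} (hc : Measurable c) (hc0 : ∀ᵐ a ∂μ, c a ≠ 0) :
    QuasiMeasurePreserving (fun p : α × E => c p.1 • p.2) (μ.prod ν) ν :=
  QuasiMeasurePreserving.prod_of_right (by fun_prop)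
    (hc0.mono fun _ ha => quasiMeasurePreserving_smul ν ha)

end Dilation

theorem lintegral_Ioo_inv_sqrt_four_mul_sub_sq :
    ∫⁻ τ in Ioo (0 : ℝ) 1, ENNReal.ofReal (1 / √(4 * (τ - τ ^ 2))) = ENNReal.ofReal (π / 2) := by
  have hcont : ContinuousOn (fun τ : ℝ => arcsin (2 * τ - 1) / 2) (Icc 0 1) := by fun_prop
  have hderiv : ∀ τ ∈ Ioo (0 : ℝ) 1,
      HasDerivAt (fun τ => arcsin (2 * τ - 1) / 2) (1 / √(4 * (τ - τ ^ 2))) τ := by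
    intro τ ⟨h0, h1⟩
    refine (((hasDerivAt_arcsin (by linarith) (by linarith)).comp τ
      (((hasDerivAt_id' τ).const_mul 2).sub_const 1)).div_const 2).congr_deriv ?_
    rw [show 1 - (2 * τ - 1) ^ 2 = 4 * (τ - τ ^ 2) by ring]
    ring
  have hint : IntegrableOn (fun τ : ℝ => 1 / √(4 * (τ - τ ^ 2))) (Ioc 0 1) :=
    intervalIntegral.integrableOn_deriv_of_nonneg hcont hderiv fun τ _ => by positivity
  rw [restrict_congr_set Ioo_ae_eq_Ioc, ← ofReal_integral_eq_lintegral_ofReal hint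
    (ae_of_all _ fun τ => by positivity), ← intervalIntegral.integral_of_le zero_le_one,
    intervalIntegral.integral_eq_sub_of_hasDerivAt_of_le zero_le_one hcont hderiv
      (intervalIntegrable_iff_integrableOn_Ioc_of_le zero_le_one |>.mpr hint)]
  norm_num [arcsin_one, arcsin_neg_one]
  congr 1
  ring

noncomputable def tauParity (τ : ℝ) (ψ : ℝ → ℂ) (x : ℝ) : ℂ :=
  ((1 / (2 * |τ - 1|) : ℝ) : ℂ) * ψ (τ * x / (τ - 1))

theorem eLpNorm_tauParity {τ : ℝ} (hτ : τ ∈ Ioo (0 : ℝ) 1) (ψ : ℝ → ℂ) :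
    eLpNorm (tauParity τ ψ) 2 volume
      = ENNReal.ofReal (1 / √(4 * (τ - τ ^ 2))) * eLpNorm ψ 2 volume := by
  obtain ⟨h0, h1⟩ := hτ
  have hc : τ / (τ - 1) ≠ 0 := div_ne_zero h0.ne' (by linarith)
  have hdil : tauParity τ ψ = (1 / (2 * |τ - 1|) : ℝ) • fun x => ψ ((τ / (τ - 1)) • x) := by
    ext x
    simp only [tauParity, Pi.smul_apply, Complex.real_smul, smul_eq_mul, mul_div_right_comm]
  have hweight : 1 / (2 * |τ - 1|) * |(τ / (τ - 1))⁻¹| ^ (1 / 2 : ℝ) = 1 / √(4 * (τ - τ ^ 2)) := by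
    rw [abs_of_neg (by linarith), inv_div, abs_div, abs_of_neg (by linarith), abs_of_pos h0,
      ← sqrt_eq_rpow, show 4 * (τ - τ ^ 2) = 2 ^ 2 * (τ * (1 - τ)) by ring,
      sqrt_mul' _ (by nlinarith), sqrt_sq zero_le_two, neg_sub, sqrt_div' _ h0.le, sqrt_mul h0.le]
    field_simp
    rw [sq_sqrt (by linarith)]
  rw [hdil, eLpNorm_const_smul, eLpNorm_comp_smul volume ψ hc ENNReal.ofNat_ne_top, ← mul_assoc,
    Module.finrank_self, pow_one, ENNReal.toReal_ofNat, Real.enorm_of_nonneg (by positivity),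
    ENNReal.ofReal_rpow_of_nonneg (abs_nonneg _) (by norm_num),
    ← ENNReal.ofReal_mul (by positivity), hweight]

theorem aestronglyMeasurable_uncurry_tauParity {ψ : ℝ → ℂ} (hψ : AEStronglyMeasurable ψ volume) :
    AEStronglyMeasurable (uncurry fun τ => tauParity τ ψ)
      ((volume.restrict (Ioo (0 : ℝ) 1)).prod volume) := by
  have hΦ : QuasiMeasurePreserving (fun p : ℝ × ℝ => p.1 * p.2 / (p.1 - 1))
      ((volume.restrict (Ioo (0 : ℝ) 1)).prod volume) volume := by
    have hdil : (fun p : ℝ × ℝ => p.1 * p.2 / (p.1 - 1)) = fun p => (p.1 / (p.1 - 1)) • p.2 := by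
      simp only [smul_eq_mul, mul_div_right_comm]
    rw [hdil]
    refine quasiMeasurePreserving_smul_prod volume (c := fun τ : ℝ => τ / (τ - 1)) (by fun_prop)
      ((ae_restrict_mem measurableSet_Ioo).mono fun τ (hτ : τ ∈ Ioo (0 : ℝ) 1) => ?_)
    exact div_ne_zero hτ.1.ne' (by linarith [hτ.2])
  exact (Measurable.aestronglyMeasurable (by fun_prop)).mul (hψ.comp_quasiMeasurePreserving hΦ)

theorem eLpNorm_integral_tauParity_le {ψ : ℝ → ℂ} (hψ : AEStronglyMeasurable ψ volume) :
    eLpNorm (fun x => ∫ τ in Ioo (0 : ℝ) 1, tauParity τ ψ x) 2 volume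
      ≤ ENNReal.ofReal (π / 2) * eLpNorm ψ 2 volume :=
  calc eLpNorm (fun x => ∫ τ in Ioo (0 : ℝ) 1, tauParity τ ψ x) 2 volume
      ≤ ∫⁻ τ in Ioo (0 : ℝ) 1, eLpNorm (tauParity τ ψ) 2 volume :=
        eLpNorm_two_integral_le_lintegral_eLpNorm_two (aestronglyMeasurable_uncurry_tauParity hψ)
    _ = ∫⁻ τ in Ioo (0 : ℝ) 1, ENNReal.ofReal (1 / √(4 * (τ - τ ^ 2))) * eLpNorm ψ 2 volume :=
        setLIntegral_congr_fun measurableSet_Ioo fun τ hτ => eLpNorm_tauParity hτ ψ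
    _ = ENNReal.ofReal (π / 2) * eLpNorm ψ 2 volume := by
        rw [lintegral_mul_const _ (by fun_prop), lintegral_Ioo_inv_sqrt_four_mul_sub_sq]

theorem BJ_parity_operator_norm_le
    (T : Lp ℂ 2 (volume : Measure ℝ) →L[ℂ] Lp ℂ 2 (volume : Measure ℝ))
    (hT : ∀ ψ : Lp ℂ 2 (volume : Measure ℝ),
      (T ψ : ℝ → ℂ) =ᵐ[volume]
        fun x => ∫ τ in (0 : ℝ)..1,
          ((1 / (2 * |τ - 1|) : ℝ) : ℂ) * ψ (τ * x / (τ - 1))) :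
    ‖T‖ ≤ Real.pi / 2 := by
  refine T.opNorm_le_bound (by positivity) fun ψ => ?_
  have hTψ : eLpNorm (T ψ) 2 volume
      = eLpNorm (fun x => ∫ τ in Ioo (0 : ℝ) 1, tauParity τ ψ x) 2 volume := by
    refine eLpNorm_congr_ae ((hT ψ).trans (ae_of_all _ fun x => ?_))
    simp only [intervalIntegral.integral_of_le zero_le_one, integral_Ioc_eq_integral_Ioo]
    rfl
  have hbound := hTψ ▸ eLpNorm_integral_tauParity_le (Lp.aestronglyMeasurable ψ)
  rw [Lp.norm_def, Lp.norm_def, ← ENNReal.toReal_ofReal pi_div_two_pos.le, ← ENNReal.toReal_mul]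
  exact ENNReal.toReal_mono (ENNReal.mul_ne_top ENNReal.ofReal_ne_top (Lp.eLpNorm_ne_top ψ)) hbound
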